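/- Suppose f has no total computable extension. For each n, equip the complete graph on five vertices n1, …, n5 with symmetric weights w_n(n1,n2) = 1, w_n(n2,n5) = 1, w_n(n3,n5) = 1, w_n(n4,n5) = 1, w_n(n3,n4) = 1, w_n(n1,n3) = C∞ n, w_n(n1,n4) = D∞ n, w_n(n2,n3) = 100, w_n(n2,n4) = 100, w_n(n1,n5) = 100. Then there is no computable function g : ℕ → Bool such that for every n, the Hamiltonian cycle selected by g n (the cycle n1–n2–n5–n4–n3–n1 if g n = false, and n1–n2–n5–n3–n4–n1 if g n = true) has minimum cost among all Hamiltonian cycles with respect to w_n. -/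

import Mathlib

/-!
If `f n = b`, the computation halts at a least step `m` with output `b`; from then on the
sequence attached to `b` is constantly `1 - 2⁻ᵐ` and the other one constantly `1`, so the edge
`n1n3` (for `false`) or `n1n4` (for `true`) is strictly the cheaper one. The two candidate tours
cost `4` plus the weight of exactly one of these edges, so an optimal choice `g n` must equal `b`:
a computable optimal selector would be a total computable extension of `f`.
-/

open Nat.Partrec (Code)
open Nat.Partrec.Code

/-- The rational sequence `C`: if `f` (computed by code `e`) halts on input `n` by step `k`,
with least halting step `m`, then `C n k = 1 - 2⁻ᵐ` if the output was `false`,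
and `1` otherwise (in particular, if the output was `true`); if it has not halted
within `k` steps, then `C n k = 1`. -/
def Cq (e : Code) (n k : ℕ) : ℚ :=
  if h : ∃ m, m ≤ k ∧ (evaln m e n).isSome then
    if evaln (Nat.find h) e n = some (Encodable.encode false) then
      1 - (2 : ℚ)⁻¹ ^ (Nat.find h)
    else 1
  else 1

/-- The rational sequence `D`: symmetric to `C`, with the roles of the outputs
`true` and `false` swapped. -/
def Dq (e : Code) (n k : ℕ) : ℚ :=
  if h : ∃ m, m ≤ k ∧ (evaln m e n).isSome then
    if evaln (Nat.find h) e n = some (Encodable.encode true) then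
      1 - (2 : ℚ)⁻¹ ^ (Nat.find h)
    else 1
  else 1

/-- `C∞ n`, the real limit of the sequence `k ↦ C n k`. -/
noncomputable def Cinf (e : Code) (n : ℕ) : ℝ :=
  Filter.limUnder Filter.atTop fun k => ((Cq e n k : ℝ))

/-- `D∞ n`, the real limit of the sequence `k ↦ D n k`. -/
noncomputable def Dinf (e : Code) (n : ℕ) : ℝ :=
  Filter.limUnder Filter.atTop fun k => ((Dq e n k : ℝ))

theorem Nat.find_le_and_eq_find {p : ℕ → Prop} [DecidablePred p] {k : ℕ}
    (h : ∃ m, m ≤ k ∧ p m) : Nat.find h = Nat.find (h.imp fun _ => And.right) :=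
  le_antisymm
    (Nat.find_min' h ⟨(Nat.find_min' _ (Nat.find_spec h).2).trans (Nat.find_spec h).1,
      Nat.find_spec (h.imp fun _ => And.right)⟩)
    (Nat.find_min' _ (Nat.find_spec h).2)

theorem List.map_formPerm_eq_rotate_one {α : Type*} [DecidableEq α] {l : List α} (hl : l.Nodup) :
    l.map l.formPerm = l.rotate 1 := by
  refine List.ext_getElem (by simp) fun i _ _ => ?_
  rw [List.getElem_map, List.formPerm_apply_getElem _ hl, List.getElem_rotate]

theorem List.sum_apply_formPerm {α M : Type*} [DecidableEq α] [Fintype α] [AddCommMonoid M]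
    {l : List α} (hl : l.Nodup) (hmem : ∀ x, x ∈ l) (f : α → α → M) :
    ∑ x, f x (l.formPerm x) = (l.zipWith f (l.rotate 1)).sum := by
  have huniv : l.toFinset = Finset.univ := Finset.eq_univ_of_forall (by simpa using hmem)
  rw [← huniv, List.sum_toFinset _ hl, ← List.map_formPerm_eq_rotate_one hl,
    List.zipWith_map_right, List.zipWith_self]

/-- `Cq e n = haltWeight e false n` and `Dq e n = haltWeight e true n` hold by `rfl`. -/
def haltWeight (e : Code) (b : Bool) (n k : ℕ) : ℚ :=
  if h : ∃ m, m ≤ k ∧ (evaln m e n).isSome then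
    if evaln (Nat.find h) e n = some (Encodable.encode b) then
      1 - (2 : ℚ)⁻¹ ^ (Nat.find h)
    else 1
  else 1

section haltWeight

variable {e : Code} {n k : ℕ}

theorem haltWeight_eq_of_le (b : Bool) (hk : (evaln k e n).isSome) {j : ℕ} (hkj : k ≤ j) :
    haltWeight e b n j = haltWeight e b n k := by
  have hj : ∃ m, m ≤ j ∧ (evaln m e n).isSome := ⟨k, hkj, hk⟩
  have hk' : ∃ m, m ≤ k ∧ (evaln m e n).isSome := ⟨k, le_rfl, hk⟩
  rw [haltWeight, haltWeight, dif_pos hj, dif_pos hk', Nat.find_le_and_eq_find hj,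
    Nat.find_le_and_eq_find hk']

theorem limUnder_haltWeight (b : Bool) (hk : (evaln k e n).isSome) :
    Filter.limUnder Filter.atTop (fun j => (haltWeight e b n j : ℝ)) = haltWeight e b n k := by
  refine Filter.Tendsto.limUnder_eq (tendsto_const_nhds.congr' ?_)
  filter_upwards [Filter.eventually_ge_atTop k] with j hkj
  rw [haltWeight_eq_of_le b hk hkj]

theorem cond_Dinf_Cinf (b : Bool) (hk : (evaln k e n).isSome) :
    cond b (Dinf e n) (Cinf e n) = haltWeight e b n k := by
  cases b
  exacts [limUnder_haltWeight false hk, limUnder_haltWeight true hk]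

theorem haltWeight_lt_haltWeight_not {b : Bool}
    (hk : evaln k e n = some (Encodable.encode b)) :
    haltWeight e b n k < haltWeight e (!b) n k := by
  have h : ∃ m, m ≤ k ∧ (evaln m e n).isSome := ⟨k, le_rfl, by simp [hk]⟩
  obtain ⟨v, hv⟩ := Option.isSome_iff_exists.1 (Nat.find_spec h).2
  have hvb : Encodable.encode b = v := by
    simpa [hk] using evaln_mono (Nat.find_spec h).1 (show v ∈ evaln _ e n from hv)
  have hne : Encodable.encode b ≠ Encodable.encode (!b) := by cases b <;> decide
  simp only [haltWeight, dif_pos h, hv, ← hvb, if_true, if_neg (Option.some_injective _ |>.ne hne)]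
  linarith [show (0 : ℚ) < 2⁻¹ ^ Nat.find h by positivity]

end haltWeight

def gadgetWeights (c d : ℝ) : Fin 5 → Fin 5 → ℝ :=
  ![![0, 1, c, d, 100],
    ![1, 0, 100, 100, 1],
    ![c, 100, 0, 1, 1],
    ![d, 100, 1, 0, 1],
    ![100, 1, 1, 1, 0]]

def gadgetTour (b : Bool) : Equiv.Perm (Fin 5) :=
  if b then ([0, 1, 4, 2, 3] : List (Fin 5)).formPerm else ([0, 1, 4, 3, 2] : List (Fin 5)).formPerm

theorem gadgetTour_isCycle (b : Bool) : (gadgetTour b).IsCycle := by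
  cases b <;> exact List.isCycle_formPerm (by decide) (by decide)

theorem gadgetTour_apply_ne (b : Bool) (x : Fin 5) : gadgetTour b x ≠ x := by
  revert x; cases b <;> decide

theorem sum_gadgetWeights_gadgetTour (c d : ℝ) (b : Bool) :
    ∑ x, gadgetWeights c d x (gadgetTour b x) = 4 + cond b d c := by
  cases b <;> simp only [gadgetTour, Bool.false_eq_true, ↓reduceIte] <;>
    rw [List.sum_apply_formPerm (by decide) (by decide)] <;>
    simp [gadgetWeights] <;> ring

theorem no_computable_solver_five_node_symmetric_tsp_general
    (f : ℕ →. Bool) (e : Code)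
    (he : ∀ (n : ℕ) (b : Bool), b ∈ f n ↔ ∃ k, evaln k e n = some (Encodable.encode b))
    (hext : ¬ ∃ g : ℕ → Bool, Computable g ∧
      ∀ (n : ℕ) (b : Bool), f n = Part.some b → g n = b)
    (w : ℕ → Fin 5 → Fin 5 → ℝ)
    (hw : ∀ n, w n = ![![0, 1, Cinf e n, Dinf e n, 100],
                       ![1, 0, 100, 100, 1],
                       ![Cinf e n, 100, 0, 1, 1],
                       ![Dinf e n, 100, 1, 0, 1],
                       ![100, 1, 1, 1, 0]]) :
    ¬ ∃ g : ℕ → Bool, Computable g ∧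
      ∀ n : ℕ, ∀ σ : Equiv.Perm (Fin 5), σ.IsCycle → (∀ x, σ x ≠ x) →
        (∑ x, w n x ((if g n then ([0, 1, 4, 2, 3] : List (Fin 5)).formPerm
                      else ([0, 1, 4, 3, 2] : List (Fin 5)).formPerm) x))
          ≤ ∑ x, w n x (σ x) := by
  rintro ⟨g, hg, hopt⟩
  refine hext ⟨g, hg, fun n b hfb => ?_⟩
  obtain ⟨k, hk⟩ := (he n b).1 (hfb ▸ Part.mem_some b)
  have hcost (b' : Bool) : ∑ x, w n x (gadgetTour b' x) = 4 + haltWeight e b' n k := by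
    rw [hw n, ← cond_Dinf_Cinf b' (by simp [hk])]
    exact sum_gadgetWeights_gadgetTour _ _ b'
  have hle := hopt n (gadgetTour b) (gadgetTour_isCycle b) (gadgetTour_apply_ne b)
  by_contra hne
  rw [Bool.eq_not.2 hne] at hle
  change ∑ x, w n x (gadgetTour (!b) x) ≤ _ at hle
  rw [hcost, hcost, add_le_add_iff_left, Rat.cast_le] at hle
  exact hle.not_gt (haltWeight_lt_haltWeight_not hk)

/-- Suppose `f` has no total computable extension. Equip, for each `n`, the complete
graph on five vertices `n1, …, n5` with symmetric weights
`w_n(n1,n2) = w_n(n2,n5) = w_n(n3,n5) = w_n(n4,n5) = w_n(n3,n4) = 1`,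
`w_n(n1,n3) = C∞ n`, `w_n(n1,n4) = D∞ n`, `w_n(n2,n3) = w_n(n2,n4) = w_n(n1,n5) = 100`.
Then there is no computable `g : ℕ → Bool` such that for every `n` the Hamiltonian
cycle selected by `g n` (namely `n1–n2–n5–n4–n3–n1` if `g n = false`, and
`n1–n2–n5–n3–n4–n1` if `g n = true`) has minimum cost among all Hamiltonian cycles
(cyclic permutations of the five vertices). -/
theorem no_computable_solver_five_node_symmetric_tsp
    (f : ℕ →. Bool) (hf : Partrec f) (e : Code)
    (he : ∀ (n : ℕ) (b : Bool), b ∈ f n ↔ ∃ k, evaln k e n = some (Encodable.encode b))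
    (hext : ¬ ∃ g : ℕ → Bool, Computable g ∧
      ∀ (n : ℕ) (b : Bool), f n = Part.some b → g n = b)
    (w : ℕ → Fin 5 → Fin 5 → ℝ)
    (hw : ∀ n, w n = ![![0, 1, Cinf e n, Dinf e n, 100],
                       ![1, 0, 100, 100, 1],
                       ![Cinf e n, 100, 0, 1, 1],
                       ![Dinf e n, 100, 1, 0, 1],
                       ![100, 1, 1, 1, 0]]) :
    ¬ ∃ g : ℕ → Bool, Computable g ∧
      ∀ n : ℕ, ∀ σ : Equiv.Perm (Fin 5), σ.IsCycle → (∀ x, σ x ≠ x) →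
        (∑ x, w n x ((if g n then ([0, 1, 4, 2, 3] : List (Fin 5)).formPerm
                      else ([0, 1, 4, 3, 2] : List (Fin 5)).formPerm) x))
          ≤ ∑ x, w n x (σ x) :=
  no_computable_solver_five_node_symmetric_tsp_general f e he hext w hw
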